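/- arXiv:2509.18766 — 5 statements merged into one kernel-verified Lean document; each statement's English description precedes it below -/
import Mathlib

section
/- Let $A \in \mathbb{R}^{d\times k}$. There exists a constant $C > 0$ depending only on $A$ such that: for every $y$ of the form $y = Au$ with $u \in \mathbb{R}^k$, $u \geq 0$, there exists $x \in \mathbb{R}^k$ with $x \geq 0$, $Ax = y$, and $\|x\| \leq C\|y\|$. -/
open Matrix

/-- Euclidean norm on `Fin n → ℝ`. -/
noncomputable def enorm₂ {n : ℕ} (x : Fin n → ℝ) : ℝ := Real.sqrt (∑ i, x i ^ 2)

/-!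
Conic Carathéodory: among the nonnegative `x` with `A x = A u` take one of minimal support. A nonzero
kernel vector of `A` supported inside that support would let us move `x` along it until one more
coordinate vanishes, so `A` is injective on the vectors supported where `x` is. On each of the
finitely many coordinate subspaces where `A` is injective it is bounded below, and the largest of
these finitely many constants serves as `C`.
-/

open Function

section ConicCaratheodory

variable {𝕜 ι : Type*} [Field 𝕜] [LinearOrder 𝕜] [IsStrictOrderedRing 𝕜] [Fintype ι]

theorem exists_nonneg_sub_smul_support_ssubset {u z : ι → 𝕜} (hu : 0 ≤ u)
    (hz : ∃ i, 0 < z i) (hzu : support z ⊆ support u) :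
    ∃ t : 𝕜, 0 ≤ u - t • z ∧ support (u - t • z) ⊂ support u := by
  obtain ⟨i₀, hi₀, hmin⟩ := Finset.exists_min_image {i | 0 < z i} (fun i => u i / z i)
    (by simpa [Finset.Nonempty] using hz)
  rw [Finset.mem_filter] at hi₀
  set t := u i₀ / z i₀
  have ht : 0 ≤ t := div_nonneg (hu i₀) hi₀.2.le
  refine ⟨t, fun i => ?_, (Set.ssubset_iff_of_subset ?_).mpr ⟨i₀, hzu hi₀.2.ne', ?_⟩⟩
  · rcases lt_or_ge 0 (z i) with h | h
    · simpa using (le_div_iff₀ h).mp (hmin i (by simpa using h))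
    · simpa using (mul_nonpos_of_nonneg_of_nonpos ht h).trans (hu i)
  · exact (support_sub _ _).trans <|
      Set.union_subset le_rfl ((support_smul_subset_right _ _).trans hzu)
  · simp [t, div_mul_cancel₀ _ hi₀.2.ne']

theorem LinearMap.exists_nonneg_eq_with_trivial_ker_on_support {M : Type*} [AddCommGroup M] [Module 𝕜 M]
    (f : (ι → 𝕜) →ₗ[𝕜] M) {u : ι → 𝕜} (hu : 0 ≤ u) :
    ∃ x, 0 ≤ x ∧ f x = f u ∧ ∀ z, support z ⊆ support x → f z = 0 → z = 0 := by
  obtain ⟨x, ⟨hx0, hfx⟩, hmin⟩ := (measure fun x : ι → 𝕜 => (support x).ncard).wf.has_min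
    {x | 0 ≤ x ∧ f x = f u} ⟨u, hu, rfl⟩
  refine ⟨x, hx0, hfx, fun z hzx hfz => ?_⟩
  by_contra hz
  obtain ⟨w, hw, hwx, hfw⟩ : ∃ w : ι → 𝕜, (∃ i, 0 < w i) ∧ support w ⊆ support x ∧ f w = 0 := by
    obtain ⟨i, hi⟩ := Function.ne_iff.mp hz
    rcases hi.lt_or_gt with h | h
    · exact ⟨-z, ⟨i, by simpa using h⟩, by rwa [support_neg], by simp [hfz]⟩
    · exact ⟨z, ⟨i, h⟩, hzx, hfz⟩
  obtain ⟨t, ht0, hts⟩ := exists_nonneg_sub_smul_support_ssubset hx0 hw hwx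
  exact hmin _ ⟨ht0, by simp [hfw, hfx]⟩ (Set.ncard_lt_ncard hts (Set.toFinite _))

end ConicCaratheodory

section BoundedBelow

variable {𝕜 E F : Type*} [NontriviallyNormedField 𝕜] [CompleteSpace 𝕜]
  [NormedAddCommGroup E] [NormedSpace 𝕜 E] [FiniteDimensional 𝕜 E]
  [NormedAddCommGroup F] [NormedSpace 𝕜 F]

theorem LinearMap.exists_norm_le_mul_norm_of_disjoint_ker (f : E →ₗ[𝕜] F) {W : Submodule 𝕜 E}
    (hW : Disjoint W (ker f)) : ∃ C > 0, ∀ x ∈ W, ‖x‖ ≤ C * ‖f x‖ := by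
  have hker : ker (f.domRestrict W) = ⊥ :=
    ker_eq_bot'.mpr fun x hx => Subtype.ext (disjoint_ker.mp hW x x.2 hx)
  obtain ⟨K, hK0, hK⟩ := (f.domRestrict W).exists_antilipschitzWith hker
  exact ⟨K, hK0, fun x hx => ZeroHomClass.bound_of_antilipschitz _ hK (⟨x, hx⟩ : W)⟩

theorem LinearMap.exists_forall_norm_le_mul_norm_of_disjoint_ker {J : Type*} [Finite J]
    (f : E →ₗ[𝕜] F) (W : J → Submodule 𝕜 E) :
    ∃ C > 0, ∀ j, Disjoint (W j) (ker f) → ∀ x ∈ W j, ‖x‖ ≤ C * ‖f x‖ := by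
  have hbound (j : J) : ∃ C > 0, Disjoint (W j) (ker f) → ∀ x ∈ W j, ‖x‖ ≤ C * ‖f x‖ := by
    by_cases hj : Disjoint (W j) (ker f)
    · obtain ⟨C, hC0, hC⟩ := f.exists_norm_le_mul_norm_of_disjoint_ker hj
      exact ⟨C, hC0, fun _ => hC⟩
    · exact ⟨1, one_pos, fun h => absurd h hj⟩
  choose C hC0 hC using hbound
  obtain ⟨M, hM⟩ := Finite.exists_le C
  refine ⟨max M 1, lt_max_of_lt_right one_pos, fun j hj x hx => (hC j hj x hx).trans ?_⟩
  exact mul_le_mul_of_nonneg_right ((hM j).trans (le_max_left _ _)) (norm_nonneg _)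

end BoundedBelow

theorem enorm₂_eq_norm_toLp {n : ℕ} (x : Fin n → ℝ) :
    enorm₂ x = ‖(WithLp.toLp 2 x : EuclideanSpace ℝ (Fin n))‖ := by
  simp [enorm₂, EuclideanSpace.norm_eq]

theorem Matrix.exists_enorm₂_le_mul_enorm₂_mulVec {d k : ℕ} (A : Matrix (Fin d) (Fin k) ℝ) :
    ∃ C > 0, ∀ x : Fin k → ℝ, (∀ z, support z ⊆ support x → A *ᵥ z = 0 → z = 0) →
      enorm₂ x ≤ C * enorm₂ (A *ᵥ x) := by
  let W (s : Set (Fin k)) : Submodule ℝ (EuclideanSpace ℝ (Fin k)) :=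
    (Submodule.pi sᶜ fun _ => ⊥).comap (WithLp.linearEquiv 2 ℝ (Fin k → ℝ)).toLinearMap
  obtain ⟨C, hC0, hC⟩ := (toLpLin 2 2 A).exists_forall_norm_le_mul_norm_of_disjoint_ker W
  refine ⟨C, hC0, fun x hinj => ?_⟩
  have hmem {s : Set (Fin k)} {z : EuclideanSpace ℝ (Fin k)} :
      z ∈ W s ↔ support z.ofLp ⊆ s := by
    simp [W, Submodule.mem_pi, Set.subset_def, not_imp_comm]
  have hdisj : Disjoint (W (support x)) (LinearMap.ker (toLpLin 2 2 A)) := by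
    refine LinearMap.disjoint_ker.mpr fun z hz hAz => ?_
    have := hinj z.ofLp (hmem.mp hz) (by simpa [toLpLin_apply] using hAz)
    simpa using congrArg (WithLp.toLp 2) this
  simpa [enorm₂_eq_norm_toLp, toLpLin_apply] using
    hC _ hdisj (WithLp.toLp 2 x) (hmem.mpr subset_rfl)

/-- There is a constant `C = C(A) > 0` such that any `y = Au` with `u ≥ 0` admits a
nonnegative solution `x` of `Ax = y` with `‖x‖ ≤ C‖y‖`. -/
theorem stmt_1 {d k : ℕ} (A : Matrix (Fin d) (Fin k) ℝ) :
    ∃ C > 0, ∀ u : Fin k → ℝ, 0 ≤ u →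
      ∃ x : Fin k → ℝ, 0 ≤ x ∧ A.mulVec x = A.mulVec u ∧
        enorm₂ x ≤ C * enorm₂ (A.mulVec u) := by
  obtain ⟨C, hC0, hC⟩ := A.exists_enorm₂_le_mul_enorm₂_mulVec
  refine ⟨C, hC0, fun u hu => ?_⟩
  obtain ⟨x, hx0, hAx, hker⟩ := A.mulVecLin.exists_nonneg_eq_with_trivial_ker_on_support hu
  rw [mulVecLin_apply, mulVecLin_apply] at hAx
  exact ⟨x, hx0, hAx, hAx ▸ hC x hker⟩
end

section
/- Let $M \in \mathbb{R}^{d\times d}$ be positive semidefinite, $q \in \mathbb{R}^d$. If $(v,x)$ and $(v',x')$ both satisfy the linear complementarity conditions $v = q + Mx$, $v \geq 0$, $x \geq 0$, $\langle v, x\rangle = 0$ and $v' = q + Mx'$, $v' \geq 0$, $x' \geq 0$, $\langle v', x'\rangle = 0$, then $v = v'$. -/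
/-!
For two solutions, `z = x - x'` satisfies `M z = v - v'`, and complementarity turns
`zᵀ M z = (v - v') ⬝ᵥ (x - x')` into `-(v ⬝ᵥ x') - (v' ⬝ᵥ x) ≤ 0`. Positive semidefiniteness
forces `zᵀ M z = 0`, hence `M z = 0`, i.e. `v = v'`.
-/

open Matrix

variable {n : Type*} [Fintype n]

structure IsLCPSolution (q : n → ℝ) (M : Matrix n n ℝ) (v x : n → ℝ) : Prop where
  eq_add_mulVec : v = q + M *ᵥ x
  nonneg_left : 0 ≤ v
  nonneg_right : 0 ≤ x
  dotProduct_eq_zero : v ⬝ᵥ x = 0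

namespace IsLCPSolution

variable {q : n → ℝ} {M : Matrix n n ℝ} {v x v' x' : n → ℝ}

theorem mulVec_sub_eq (h : IsLCPSolution q M v x) (h' : IsLCPSolution q M v' x') :
    M *ᵥ (x - x') = v - v' := by
  rw [Matrix.mulVec_sub, h.eq_add_mulVec, h'.eq_add_mulVec]
  abel

theorem dotProduct_mulVec_sub_nonpos (h : IsLCPSolution q M v x)
    (h' : IsLCPSolution q M v' x') : (x - x') ⬝ᵥ M *ᵥ (x - x') ≤ 0 := by
  have hvx' : 0 ≤ v ⬝ᵥ x' := dotProduct_nonneg_of_nonneg h.nonneg_left h'.nonneg_right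
  have hv'x : 0 ≤ v' ⬝ᵥ x := dotProduct_nonneg_of_nonneg h'.nonneg_left h.nonneg_right
  rw [h.mulVec_sub_eq h', sub_dotProduct, dotProduct_sub, dotProduct_sub, dotProduct_comm x v,
    dotProduct_comm x' v', h.dotProduct_eq_zero, h'.dotProduct_eq_zero, dotProduct_comm x v',
    dotProduct_comm x' v]
  linarith

theorem eq_of_posSemidef (hM : M.PosSemidef) (h : IsLCPSolution q M v x)
    (h' : IsLCPSolution q M v' x') : v = v' := by
  have hzero : (x - x') ⬝ᵥ M *ᵥ (x - x') = 0 :=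
    le_antisymm (h.dotProduct_mulVec_sub_nonpos h')
      (by simpa only [star_trivial] using hM.dotProduct_mulVec_nonneg (x - x'))
  rw [← sub_eq_zero, ← h.mulVec_sub_eq h']
  exact (hM.dotProduct_mulVec_zero_iff _).mp (by simpa only [star_trivial] using hzero)

end IsLCPSolution

/-- Uniqueness of the `v`-component of an LCP with positive semidefinite matrix. -/
theorem stmt_3 {d : ℕ} (M : Matrix (Fin d) (Fin d) ℝ) (hM : M.PosSemidef) (q : Fin d → ℝ)
    (v x v' x' : Fin d → ℝ)
    (h1 : v = q + M.mulVec x) (h2 : 0 ≤ v) (h3 : 0 ≤ x) (h4 : v ⬝ᵥ x = 0)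
    (h1' : v' = q + M.mulVec x') (h2' : 0 ≤ v') (h3' : 0 ≤ x') (h4' : v' ⬝ᵥ x' = 0) :
    v = v' :=
  IsLCPSolution.eq_of_posSemidef hM ⟨h1, h2, h3, h4⟩ ⟨h1', h2', h3', h4'⟩
end

section
/- Let $M \in \mathbb{R}^{d\times d}$ be positive semidefinite and $r \in \mathrm{span}(M)$. For each $s \geq 0$, let $(w(s), z(s))$ solve the parametric LCP: $w(s) = -sr + \mathbf{1} + Mz(s)$, $w(s) \geq 0$, $z(s) \geq 0$, $\langle w(s), z(s)\rangle = 0$. Then for any $s, s' \geq 0$: $w(s) - w(s') \in \mathrm{span}(M)$ and $\|w(s) - w(s')\|_{M^\dagger} \leq |s - s'| \cdot \|r\|_{M^\dagger}$. In particular $s \mapsto w(s)$ is Lipschitz continuous. -/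
/-!
Writing `w(s) - w(s') = M e` with `e = (s' - s) c + (z(s) - z(s'))`, where `r = M c`, the
pseudoinverse identity `M M† M = M` turns `‖w(s) - w(s')‖²_{M†}` into `⟨e, M e⟩`. Complementarity
makes `⟨w(s) - w(s'), z(s) - z(s')⟩ ≤ 0`, so `⟨e, M e⟩ ≤ (s' - s) ⟨e, M c⟩`, and Cauchy–Schwarz for
the semi-inner product `⟨·, M ·⟩` bounds the right-hand side by
`|s - s'| √⟨e, M e⟩ √⟨c, M c⟩ = |s - s'| √⟨e, M e⟩ ‖r‖_{M†}`.
-/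

open Matrix

namespace Matrix

variable {n R : Type*} [Fintype n]

theorem IsSymm.dotProduct_mulVec_comm [CommSemiring R] {A : Matrix n n R} (hA : A.IsSymm)
    (x y : n → R) : x ⬝ᵥ A *ᵥ y = y ⬝ᵥ A *ᵥ x := by
  simpa only [hA.eq] using dotProduct_transpose_mulVec A x y

theorem IsSymm.mulVec_dotProduct_mulVec_mulVec_of_mul_mul_eq [CommSemiring R]
    {A A' : Matrix n n R} (hA : A.IsSymm) (h : A * A' * A = A) (x y : n → R) :
    (A *ᵥ x) ⬝ᵥ A' *ᵥ (A *ᵥ y) = x ⬝ᵥ A *ᵥ y := by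
  rw [mulVec_mulVec, dotProduct_mulVec, ← vecMul_transpose (x := x), vecMul_vecMul, hA.eq,
    ← mul_assoc, h, ← dotProduct_mulVec]

section Ordered

variable [CommRing R] [LinearOrder R] [IsStrictOrderedRing R]

theorem dotProduct_sub_sub_nonpos_of_complementary {w z w' z' : n → R} (hw : 0 ≤ w) (hz : 0 ≤ z)
    (hw' : 0 ≤ w') (hz' : 0 ≤ z') (hwz : w ⬝ᵥ z = 0) (hwz' : w' ⬝ᵥ z' = 0) :
    (w - w') ⬝ᵥ (z - z') ≤ 0 := by
  have h₁ : 0 ≤ w ⬝ᵥ z' := dotProduct_nonneg_of_nonneg hw hz'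
  have h₂ : 0 ≤ w' ⬝ᵥ z := dotProduct_nonneg_of_nonneg hw' hz
  simp only [sub_dotProduct, dotProduct_sub, hwz, hwz']
  linarith

theorem PosSemidef.dotProduct_mulVec_sq_le [StarRing R] [TrivialStar R] {A : Matrix n n R}
    (hA : A.PosSemidef) (x y : n → R) :
    (x ⬝ᵥ A *ᵥ y) ^ 2 ≤ (x ⬝ᵥ A *ᵥ x) * (y ⬝ᵥ A *ᵥ y) := by
  classical
  have hsymm : A.IsSymm := isHermitian_iff_isSymm.mp hA.isHermitian
  have h := LinearMap.BilinForm.apply_mul_apply_le_of_forall_zero_le (toLinearMap₂' R A)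
    (fun v ↦ by simpa only [toLinearMap₂'_apply', star_trivial] using hA.dotProduct_mulVec_nonneg v)
    x y
  simpa only [toLinearMap₂'_apply', hsymm.dotProduct_mulVec_comm y x, ← sq] using h

end Ordered

theorem PosSemidef.sqrt_dotProduct_mulVec_le_of_le_mul {A : Matrix n n ℝ} (hA : A.PosSemidef)
    {e c : n → ℝ} {k : ℝ} (h : e ⬝ᵥ A *ᵥ e ≤ k * (e ⬝ᵥ A *ᵥ c)) :
    √(e ⬝ᵥ A *ᵥ e) ≤ |k| * √(c ⬝ᵥ A *ᵥ c) := by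
  set a := e ⬝ᵥ A *ᵥ e
  set b := c ⬝ᵥ A *ᵥ c
  have ha : 0 ≤ a := by simpa using hA.dotProduct_mulVec_nonneg e
  have hb : 0 ≤ b := by simpa using hA.dotProduct_mulVec_nonneg c
  have hcs : |e ⬝ᵥ A *ᵥ c| ≤ √a * √b := by
    rw [← Real.sqrt_mul ha]
    exact Real.abs_le_sqrt (hA.dotProduct_mulVec_sq_le e c)
  have hsq : √a * √a ≤ (|k| * √b) * √a := by
    calc √a * √a = a := Real.mul_self_sqrt ha
      _ ≤ |k * (e ⬝ᵥ A *ᵥ c)| := h.trans (le_abs_self _)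
      _ ≤ |k| * (√a * √b) := by rw [abs_mul]; gcongr
      _ = (|k| * √b) * √a := by ring
  rcases (Real.sqrt_nonneg a).eq_or_lt with ha₀ | ha₀
  · rw [← ha₀]
    positivity
  · exact le_of_mul_le_mul_right hsq ha₀

end Matrix

theorem stmt_5_general {d : ℕ} (M Mdag : Matrix (Fin d) (Fin d) ℝ) (hM : M.PosSemidef)
    (hp1 : M * Mdag * M = M)
    (r : Fin d → ℝ) (hr : ∃ c, M.mulVec c = r)
    (w z : ℝ → Fin d → ℝ)
    (hlcp : ∀ s : ℝ, 0 ≤ s →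
      w s = -(s • r) + 1 + M.mulVec (z s) ∧ 0 ≤ w s ∧ 0 ≤ z s ∧ w s ⬝ᵥ z s = 0) :
    ∀ s s' : ℝ, 0 ≤ s → 0 ≤ s' →
      (∃ c, M.mulVec c = w s - w s') ∧
      Real.sqrt ((w s - w s') ⬝ᵥ Mdag.mulVec (w s - w s')) ≤
        |s - s'| * Real.sqrt (r ⬝ᵥ Mdag.mulVec r) := by
  intro s s' hs hs'
  obtain ⟨c, rfl⟩ := hr
  obtain ⟨hw, hw₀, hz₀, hwz⟩ := hlcp s hs
  obtain ⟨hw', hw₀', hz₀', hwz'⟩ := hlcp s' hs'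
  have hsymm : M.IsSymm := isHermitian_iff_isSymm.mp hM.isHermitian
  set e := (s' - s) • c + (z s - z s')
  have hdiff : w s - w s' = M *ᵥ e := by
    rw [hw, hw', mulVec_add, mulVec_smul, mulVec_sub]
    module
  have hmono := dotProduct_sub_sub_nonpos_of_complementary hw₀ hz₀ hw₀' hz₀' hwz hwz'
  have hquad : e ⬝ᵥ M *ᵥ e ≤ (s' - s) * (e ⬝ᵥ M *ᵥ c) := by
    have h : e ⬝ᵥ M *ᵥ e = (s' - s) * (c ⬝ᵥ M *ᵥ e) + (z s - z s') ⬝ᵥ (w s - w s') := by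
      rw [hdiff]
      simp only [e, add_dotProduct, smul_dotProduct, smul_eq_mul]
    rw [hsymm.dotProduct_mulVec_comm c, dotProduct_comm (z s - z s')] at h
    linarith
  refine ⟨⟨e, hdiff.symm⟩, ?_⟩
  rw [hdiff, hsymm.mulVec_dotProduct_mulVec_mulVec_of_mul_mul_eq hp1,
    hsymm.mulVec_dotProduct_mulVec_mulVec_of_mul_mul_eq hp1, abs_sub_comm]
  exact hM.sqrt_dotProduct_mulVec_le_of_le_mul hquad

/-- Lipschitz estimate in the `M†`-seminorm for the `w`-component of the parametric LCP.
`Mdag` is the Moore–Penrose pseudoinverse of `M`, specified by the four Penrose conditions. -/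
theorem stmt_5 {d : ℕ} (M Mdag : Matrix (Fin d) (Fin d) ℝ) (hM : M.PosSemidef)
    (hp1 : M * Mdag * M = M) (hp2 : Mdag * M * Mdag = Mdag)
    (hp3 : (M * Mdag)ᵀ = M * Mdag) (hp4 : (Mdag * M)ᵀ = Mdag * M)
    (r : Fin d → ℝ) (hr : ∃ c, M.mulVec c = r)
    (w z : ℝ → Fin d → ℝ)
    (hlcp : ∀ s : ℝ, 0 ≤ s →
      w s = -(s • r) + 1 + M.mulVec (z s) ∧ 0 ≤ w s ∧ 0 ≤ z s ∧ w s ⬝ᵥ z s = 0) :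
    ∀ s s' : ℝ, 0 ≤ s → 0 ≤ s' →
      (∃ c, M.mulVec c = w s - w s') ∧
      Real.sqrt ((w s - w s') ⬝ᵥ Mdag.mulVec (w s - w s')) ≤
        |s - s'| * Real.sqrt (r ⬝ᵥ Mdag.mulVec r) :=
  stmt_5_general M Mdag hM hp1 r hr w z hlcp
end

section
/- Let $M$ be positive semidefinite, $r \in \mathrm{span}(M)$. For $s \geq 0$ let $(w(s), z(s))$ solve the parametric LCP $w(s) = -sr + \mathbf{1} + Mz(s)$, $w(s) \geq 0$, $z(s) \geq 0$, $\langle w(s), z(s)\rangle = 0$, and assume $s \mapsto z(s)$ is coordinatewise nondecreasing. Then there exists $C > 0$ depending on $d, M, r$ such that for all $0 \leq s_1 \leq s_2$: $\|z(s_2) - z(s_1)\|_1 \leq C(1 + s_1 + s_2)|s_2 - s_1|$. In particular $z$ is Lipschitz on compact subsets of $[0,\infty)$. -/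
open Matrix
open scoped MatrixOrder RealInnerProductSpace

/-!
Write `M = BᵀB` and `L v = B v`, so that `⟨u, M v⟩ = ⟪L u, L v⟫`, and `r = M c`. For two
solutions of the LCP, `⟨w₂ - w₁, z₂ - z₁⟩ ≤ 0` by complementarity; since
`w₂ - w₁ = -(s₂ - s₁) r + M (z₂ - z₁)` this reads `‖L (z₂ - z₁)‖² ≤ (s₂ - s₁) ⟪L (z₂ - z₁), L c⟫`,
so `‖L (z₂ - z₁)‖ ≤ (s₂ - s₁) ‖L c‖`. Comparing with the trivial solution `z = 0` of the problem
at `s = 0` gives `‖L z(s)‖ ≤ s ‖L c‖`. As `z` is nondecreasing, `‖z₂ - z₁‖₁ = ⟨1, z₂ - z₁⟩`, and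
complementarity at `s₂` bounds this by `⟪L (z₂ - z₁), s₂ L c - L z₂⟫ ≤ 2 s₂ (s₂ - s₁) ‖L c‖²`.
-/

theorem Matrix.PosSemidef.exists_dotProduct_mulVec_eq_inner {n : Type*} [Fintype n]
    {M : Matrix n n ℝ} (hM : M.PosSemidef) :
    ∃ L : (n → ℝ) → EuclideanSpace ℝ n, ∀ u v, u ⬝ᵥ M *ᵥ v = ⟪L u, L v⟫ := by
  classical
  obtain ⟨B, rfl⟩ := CStarAlgebra.nonneg_iff_eq_star_mul_self.mp hM.nonneg
  refine ⟨fun v => WithLp.toLp 2 (B *ᵥ v), fun u v => ?_⟩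
  rw [EuclideanSpace.inner_eq_star_dotProduct, ← mulVec_mulVec, dotProduct_mulVec,
    star_eq_conjTranspose, conjTranspose_eq_transpose_of_trivial, vecMul_transpose, dotProduct_comm]
  simp

theorem norm_le_mul_norm_of_inner_self_le {E : Type*} [NormedAddCommGroup E]
    [InnerProductSpace ℝ E] {x y : E} {a : ℝ} (ha : 0 ≤ a) (h : ⟪x, x⟫ ≤ a * ⟪x, y⟫) :
    ‖x‖ ≤ a * ‖y‖ := by
  rw [real_inner_self_eq_norm_sq] at h
  have hcs := real_inner_le_norm x y
  by_contra! hlt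
  nlinarith [norm_nonneg x, mul_nonneg ha (norm_nonneg y)]

section LCP

variable {n : Type*} [Fintype n] {M : Matrix n n ℝ}

def IsLCPSolution_s14 (M : Matrix n n ℝ) (q w z : n → ℝ) : Prop :=
  w = q + M *ᵥ z ∧ 0 ≤ w ∧ 0 ≤ z ∧ w ⬝ᵥ z = 0

variable {q q₁ q₂ w w₁ w₂ z z₁ z₂ : n → ℝ}

lemma isLCPSolution_zero (hq : 0 ≤ q) : IsLCPSolution_s14 M q q 0 := by
  simp [IsLCPSolution_s14, hq]

namespace IsLCPSolution_s14

lemma dotProduct_sub_nonpos (h : IsLCPSolution_s14 M q w z) {z' : n → ℝ} (hz' : 0 ≤ z') :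
    w ⬝ᵥ (z - z') ≤ 0 := by
  rw [dotProduct_sub, h.2.2.2, zero_sub, neg_nonpos]
  exact dotProduct_nonneg_of_nonneg h.2.1 hz'

lemma dotProduct_sub_le (h : IsLCPSolution_s14 M q w z) {z' : n → ℝ} (hz' : 0 ≤ z') :
    q ⬝ᵥ (z - z') ≤ -((z - z') ⬝ᵥ M *ᵥ z) := by
  have := h.dotProduct_sub_nonpos hz'
  rw [h.1, add_dotProduct, dotProduct_comm (M *ᵥ z)] at this
  linarith

lemma sub_dotProduct_mulVec_sub_le (h₁ : IsLCPSolution_s14 M q₁ w₁ z₁)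
    (h₂ : IsLCPSolution_s14 M q₂ w₂ z₂) :
    (z₂ - z₁) ⬝ᵥ M *ᵥ (z₂ - z₁) ≤ (q₁ - q₂) ⬝ᵥ (z₂ - z₁) := by
  have h₁₂ := h₁.dotProduct_sub_le h₂.2.2.1
  have h₂₁ := h₂.dotProduct_sub_le h₁.2.2.1
  rw [← neg_sub z₂ z₁, dotProduct_neg, neg_dotProduct] at h₁₂
  simp only [sub_dotProduct, mulVec_sub, dotProduct_sub] at h₁₂ h₂₁ ⊢
  linarith

variable {E : Type*} [NormedAddCommGroup E] [InnerProductSpace ℝ E] {L : (n → ℝ) → E}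
  {c : n → ℝ} {t t₁ t₂ : ℝ}

lemma norm_map_sub_le (hL : ∀ u v, u ⬝ᵥ M *ᵥ v = ⟪L u, L v⟫)
    (h₁ : IsLCPSolution_s14 M (q - t₁ • M *ᵥ c) w₁ z₁) (h₂ : IsLCPSolution_s14 M (q - t₂ • M *ᵥ c) w₂ z₂)
    (ht : t₁ ≤ t₂) : ‖L (z₂ - z₁)‖ ≤ (t₂ - t₁) * ‖L c‖ := by
  refine norm_le_mul_norm_of_inner_self_le (sub_nonneg.2 ht) ?_
  have := h₁.sub_dotProduct_mulVec_sub_le h₂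
  rwa [sub_sub_sub_cancel_left, ← sub_smul, smul_dotProduct, smul_eq_mul,
    dotProduct_comm (M *ᵥ c), hL, hL] at this

lemma norm_map_le (hL : ∀ u v, u ⬝ᵥ M *ᵥ v = ⟪L u, L v⟫) (hq : 0 ≤ q)
    (h : IsLCPSolution_s14 M (q - t • M *ᵥ c) w z) (ht : 0 ≤ t) : ‖L z‖ ≤ t * ‖L c‖ := by
  have h₀ : IsLCPSolution_s14 M (q - (0 : ℝ) • M *ᵥ c) q 0 := by simpa using isLCPSolution_zero hq
  simpa using norm_map_sub_le hL h₀ h ht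

lemma dotProduct_sub_le_mul_sub (hL : ∀ u v, u ⬝ᵥ M *ᵥ v = ⟪L u, L v⟫) (hq : 0 ≤ q)
    (h₁ : IsLCPSolution_s14 M (q - t₁ • M *ᵥ c) w₁ z₁) (h₂ : IsLCPSolution_s14 M (q - t₂ • M *ᵥ c) w₂ z₂)
    (ht : t₁ ≤ t₂) (ht₂ : 0 ≤ t₂) :
    q ⬝ᵥ (z₂ - z₁) ≤ 2 * t₂ * (t₂ - t₁) * ‖L c‖ ^ 2 := by
  have hΔ := norm_map_sub_le hL h₁ h₂ ht
  have hz₂ := norm_map_le hL hq h₂ ht₂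
  have hcompl := h₂.dotProduct_sub_le h₁.2.2.1
  rw [sub_dotProduct, smul_dotProduct, smul_eq_mul, dotProduct_comm (M *ᵥ c), hL, hL] at hcompl
  calc q ⬝ᵥ (z₂ - z₁) ≤ ⟪L (z₂ - z₁), t₂ • L c - L z₂⟫ := by
        rw [inner_sub_right, real_inner_smul_right]; linarith
    _ ≤ ‖L (z₂ - z₁)‖ * (t₂ * ‖L c‖ + ‖L z₂‖) := by
        refine (real_inner_le_norm _ _).trans (mul_le_mul_of_nonneg_left ?_ (norm_nonneg _))
        refine (norm_sub_le _ _).trans_eq ?_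
        rw [norm_smul, Real.norm_of_nonneg ht₂]
    _ ≤ (t₂ - t₁) * ‖L c‖ * (t₂ * ‖L c‖ + t₂ * ‖L c‖) := by gcongr
    _ = 2 * t₂ * (t₂ - t₁) * ‖L c‖ ^ 2 := by ring

end IsLCPSolution_s14

end LCP

/-- Under monotonicity of `z`, the solution of the parametric LCP satisfies a quantitative
local Lipschitz bound in `‖·‖₁`. -/
theorem stmt_14 {d : ℕ} (M : Matrix (Fin d) (Fin d) ℝ) (hM : M.PosSemidef)
    (r : Fin d → ℝ) (hr : ∃ c, M.mulVec c = r)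
    (w z : ℝ → Fin d → ℝ)
    (hlcp : ∀ s : ℝ, 0 ≤ s →
      w s = -(s • r) + 1 + M.mulVec (z s) ∧ 0 ≤ w s ∧ 0 ≤ z s ∧ w s ⬝ᵥ z s = 0)
    (hmono : ∀ i, MonotoneOn (fun s => z s i) (Set.Ici (0 : ℝ))) :
    ∃ C > (0:ℝ), ∀ s₁ s₂ : ℝ, 0 ≤ s₁ → s₁ ≤ s₂ →
      ∑ i, |z s₂ i - z s₁ i| ≤ C * (1 + s₁ + s₂) * (s₂ - s₁) := by
  obtain ⟨c, rfl⟩ := hr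
  obtain ⟨L, hL⟩ := hM.exists_dotProduct_mulVec_eq_inner
  have hsol : ∀ s, 0 ≤ s → IsLCPSolution_s14 M (1 - s • M *ᵥ c) (w s) (z s) := fun s hs => by
    simpa only [IsLCPSolution_s14, neg_add_eq_sub] using hlcp s hs
  refine ⟨2 * ‖L c‖ ^ 2 + 1, by positivity, fun s₁ s₂ hs₁ h₁₂ => ?_⟩
  have hs₂ := hs₁.trans h₁₂
  calc ∑ i, |z s₂ i - z s₁ i| = 1 ⬝ᵥ (z s₂ - z s₁) := by
        rw [one_dotProduct]
        exact Finset.sum_congr rfl fun i _ => abs_of_nonneg (sub_nonneg.2 (hmono i hs₁ hs₂ h₁₂))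
    _ ≤ 2 * s₂ * (s₂ - s₁) * ‖L c‖ ^ 2 :=
        (hsol s₁ hs₁).dotProduct_sub_le_mul_sub hL zero_le_one (hsol s₂ hs₂) h₁₂ hs₂
    _ ≤ (2 * ‖L c‖ ^ 2 + 1) * (1 + s₁ + s₂) * (s₂ - s₁) := by
        nlinarith [sq_nonneg ‖L c‖, mul_nonneg (sq_nonneg ‖L c‖) (sub_nonneg.2 h₁₂)]
end

section
/- Let $M$ be positive semidefinite, $\ell(x) = \frac12\langle x,Mx\rangle - \langle r,x\rangle$ with $r\in\mathrm{span}(M)$, and let $x^\varepsilon(t) > 0$ solve $\frac{dx}{dt} = -4\, x\circ\nabla\ell(x)$ with $x^\varepsilon(0) = \varepsilon\alpha^2$, all $\alpha_i \neq 0$. Then for every $t \geq 0$, $x^\varepsilon(t)$ is the unique minimizer of $D(x, x^\varepsilon(0))$ over $\{x \geq 0 : Mx = Mx^\varepsilon(t)\}$, where $D(x,y) = \frac14\sum_i(x_i\log\frac{x_i}{y_i} - x_i + y_i)$ (with $0\log 0 = 0$). -/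
/-!
Along the flow, `d/dt log x(t) = -4 (M x(t) - r)` stays in the range of `M`, which is the
orthogonal complement of `ker M` since `M` is symmetric. Hence for any `x'` with `M x' = M x(t)`
the vector `x' - x(t) ∈ ker M` is orthogonal to `log x(t) - log x(0)`, and the three-point
identity of the Bregman divergence collapses to the Pythagorean relation
`D(x', x(0)) = D(x(t), x(0)) + D(x', x(t))`, whose last term is nonnegative and vanishes only
at `x' = x(t)`.
-/

open Matrix

/-- Bregman divergence of the entropy mirror map. -/
noncomputable def breg {n : ℕ} (x y : Fin n → ℝ) : ℝ :=
  (1/4) * ∑ i, (x i * Real.log (x i / y i) - x i + y i)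

open InformationTheory

lemma mul_log_div_sub_add_eq_mul_klFun (a : ℝ) {b : ℝ} (hb : b ≠ 0) :
    a * Real.log (a / b) - a + b = b * klFun (a / b) := by
  rw [klFun_apply]
  field_simp
  ring

lemma breg_eq_sum_mul_klFun {n : ℕ} (x : Fin n → ℝ) {y : Fin n → ℝ} (hy : ∀ i, 0 < y i) :
    breg x y = (1/4) * ∑ i, y i * klFun (x i / y i) := by
  simp only [breg, mul_log_div_sub_add_eq_mul_klFun _ (hy _).ne']

lemma breg_nonneg {n : ℕ} {x y : Fin n → ℝ} (hx : 0 ≤ x) (hy : ∀ i, 0 < y i) :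
    0 ≤ breg x y := by
  rw [breg_eq_sum_mul_klFun x hy]
  have := Finset.sum_nonneg fun i (_ : i ∈ Finset.univ) =>
    mul_nonneg (hy i).le (klFun_nonneg (div_nonneg (hx i) (hy i).le))
  linarith

lemma breg_pos {n : ℕ} {x y : Fin n → ℝ} (hx : 0 ≤ x) (hy : ∀ i, 0 < y i) (hne : x ≠ y) :
    0 < breg x y := by
  obtain ⟨i, hi⟩ := Function.ne_iff.mp hne
  have hterm : 0 < y i * klFun (x i / y i) := by
    refine mul_pos (hy i) (lt_of_le_of_ne (klFun_nonneg (div_nonneg (hx i) (hy i).le)) ?_)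
    rw [ne_comm, Ne, klFun_eq_zero_iff (div_nonneg (hx i) (hy i).le), div_eq_one_iff_eq (hy i).ne']
    exact hi
  rw [breg_eq_sum_mul_klFun x hy]
  have := Finset.sum_pos' (fun j (_ : j ∈ Finset.univ) =>
    mul_nonneg (hy j).le (klFun_nonneg (div_nonneg (hx j) (hy j).le))) ⟨i, Finset.mem_univ i, hterm⟩
  linarith

lemma breg_sub_breg {n : ℕ} {x y z : Fin n → ℝ} (hy : ∀ i, 0 < y i) (hz : ∀ i, 0 < z i) :
    breg x z - breg y z =
      breg x y + (1/4) * (x - y) ⬝ᵥ fun i => Real.log (y i) - Real.log (z i) := by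
  have hterm : ∀ i,
      (x i * Real.log (x i / z i) - x i + z i) - (y i * Real.log (y i / z i) - y i + z i) =
        (x i * Real.log (x i / y i) - x i + y i) +
          (x i - y i) * (Real.log (y i) - Real.log (z i)) := by
    intro i
    by_cases hxi : x i = 0
    · rw [hxi, Real.log_div (hy i).ne' (hz i).ne']
      ring
    · rw [Real.log_div hxi (hz i).ne', Real.log_div hxi (hy i).ne',
        Real.log_div (hy i).ne' (hz i).ne']
      ring
  calc breg x z - breg y z
      = (1/4) * ∑ i, ((x i * Real.log (x i / z i) - x i + z i)
          - (y i * Real.log (y i / z i) - y i + z i)) := by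
        rw [breg, breg, Finset.sum_sub_distrib]; ring
    _ = breg x y + (1/4) * (x - y) ⬝ᵥ fun i => Real.log (y i) - Real.log (z i) := by
        simp only [hterm, Finset.sum_add_distrib, breg, dotProduct, Pi.sub_apply]; ring

lemma Matrix.IsSymm.dotProduct_mulVec_eq_zero {n : Type*} [Fintype n] {A : Matrix n n ℝ}
    (hA : A.IsSymm) {v : n → ℝ} (hv : A *ᵥ v = 0) (w : n → ℝ) : v ⬝ᵥ A *ᵥ w = 0 := by
  rw [← hA.eq, dotProduct_transpose_mulVec, hv, dotProduct_zero]

lemma dotProduct_log_eq_of_hasDerivAt {ι : Type*} [Fintype ι] {x g : ℝ → ι → ℝ} {v : ι → ℝ}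
    (hpos : ∀ t i, 0 < x t i) (hderiv : ∀ t i, HasDerivAt (fun t => x t i) (x t i * g t i) t)
    (horth : ∀ t, v ⬝ᵥ g t = 0) (s t : ℝ) :
    (v ⬝ᵥ fun i => Real.log (x s i)) = v ⬝ᵥ fun i => Real.log (x t i) := by
  have hzero : ∀ t, HasDerivAt (fun t => v ⬝ᵥ fun i => Real.log (x t i)) 0 t := by
    intro t
    have hlog : ∀ i ∈ Finset.univ, HasDerivAt (fun t => v i * Real.log (x t i)) (v i * g t i) t :=
      fun i _ => (((hderiv t i).log (hpos t i).ne').congr_deriv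
        (mul_div_cancel_left₀ _ (hpos t i).ne')).const_mul (v i)
    exact (HasDerivAt.fun_sum hlog).congr_deriv (horth t)
  exact is_const_of_deriv_eq_zero (fun t => (hzero t).differentiableAt)
    (fun t => (hzero t).deriv) s t

theorem stmt_19_general {d : ℕ} (M : Matrix (Fin d) (Fin d) ℝ) (hM : M.PosSemidef)
    (r : Fin d → ℝ) (hr : ∃ u, M.mulVec u = r)
    (x : ℝ → Fin d → ℝ)
    (hpos : ∀ t i, 0 < x t i)
    (hode : ∀ t : ℝ, ∀ i,
      HasDerivAt (fun t => x t i) (-4 * x t i * (M.mulVec (x t) i - r i)) t) :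
    ∀ t : ℝ, 0 ≤ t → ∀ x' : Fin d → ℝ, 0 ≤ x' → M.mulVec x' = M.mulVec (x t) →
      breg (x t) (x 0) ≤ breg x' (x 0) ∧
      (x' ≠ x t → breg (x t) (x 0) < breg x' (x 0)) := by
  intro t _ x' hx' hMx'
  obtain ⟨u, rfl⟩ := hr
  have hsymm : M.IsSymm := isHermitian_iff_isSymm.mp hM.1
  have hker : M *ᵥ (x' - x t) = 0 := by rw [mulVec_sub, hMx', sub_self]
  have hlog : ((x' - x t) ⬝ᵥ fun i => Real.log (x t i) - Real.log (x 0 i)) = 0 := by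
    have hderiv : ∀ s i, HasDerivAt (fun s => x s i)
        (x s i * ((-4 : ℝ) • M *ᵥ (x s - u)) i) s := fun s i =>
      (hode s i).congr_deriv (by simp only [mulVec_sub, Pi.smul_apply,
        Pi.sub_apply, smul_eq_mul]; ring)
    have hconst := dotProduct_log_eq_of_hasDerivAt hpos hderiv
      (fun s => by rw [dotProduct_smul, hsymm.dotProduct_mulVec_eq_zero hker, smul_zero]) t 0
    change (x' - x t) ⬝ᵥ ((fun i => Real.log (x t i)) - fun i => Real.log (x 0 i)) = 0
    rw [dotProduct_sub, hconst, sub_self]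
  have hpythagoras := breg_sub_breg (x := x') (hpos t) (hpos 0)
  rw [hlog, mul_zero, add_zero] at hpythagoras
  exact ⟨by linarith [breg_nonneg hx' (hpos t)],
    fun hne => by linarith [breg_pos hx' (hpos t) hne]⟩

/-- Along the flow `dx/dt = -4 x ∘ ∇ℓ(x)` with `ℓ(x) = ½⟨x,Mx⟩ - ⟨r,x⟩` started at `εα²`,
the point `x(t)` is the unique minimizer of `D(·, x(0))` over `{x' ≥ 0 : Mx' = Mx(t)}`. -/
theorem stmt_19 {d : ℕ} (M : Matrix (Fin d) (Fin d) ℝ) (hM : M.PosSemidef)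
    (r : Fin d → ℝ) (hr : ∃ u, M.mulVec u = r)
    (α : Fin d → ℝ) (hα : ∀ i, α i ≠ 0) (ε : ℝ) (hε : 0 < ε)
    (x : ℝ → Fin d → ℝ) (hx0 : x 0 = fun i => ε * (α i) ^ 2)
    (hpos : ∀ t i, 0 < x t i)
    (hode : ∀ t : ℝ, ∀ i,
      HasDerivAt (fun t => x t i) (-4 * x t i * (M.mulVec (x t) i - r i)) t) :
    ∀ t : ℝ, 0 ≤ t → ∀ x' : Fin d → ℝ, 0 ≤ x' → M.mulVec x' = M.mulVec (x t) →
      breg (x t) (x 0) ≤ breg x' (x 0) ∧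
      (x' ≠ x t → breg (x t) (x 0) < breg x' (x 0)) :=
  stmt_19_general M hM r hr x hpos hode
end
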